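/- arXiv:1611.06346 — 2 statements merged into one kernel-verified Lean document; each statement's English description precedes it below -/
import Mathlib

section
/- Suppose f : ℝⁿ → ℝⁿ is continuous and asymptotically quasi-homogeneous of type α and order k+1 at infinity with continuous quasi-homogeneous part f_{α,k}. Then the desingularized vector field g : D → ℝⁿ extends to a continuous map G on the closed disk D̄ = {x ∈ ℝⁿ : p(x) ≤ 1}, and for every x on the horizon E = {p(x) = 1} the extension is given by Gᵢ(x) = (f_{α,k})ᵢ(x) − (αᵢ xᵢ / c) · ∑_{j∈I} βⱼ aⱼ xⱼ^{2βⱼ−1} (f_{α,k})ⱼ(x). -/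
open Finset

/-- The quasi-Poincaré functional `p(y) = (∑_{i∈I} aᵢ yᵢ^{2βᵢ})^{1/(2c)}`,
where `I = {i : 0 < αᵢ}`. -/
noncomputable def pF {n : ℕ} (α β : Fin n → ℕ) (a : Fin n → ℝ) (c : ℕ)
    (y : Fin n → ℝ) : ℝ :=
  (∑ i ∈ univ.filter (fun i => 0 < α i), a i * y i ^ (2 * β i)) ^ ((1 : ℝ) / (2 * (c : ℝ)))

/-- `κ̂(x) = (1 − ∑_{i∈I} aᵢ xᵢ^{2βᵢ})^{−1/(2c)}`, i.e. `κ(T⁻¹(x))` for `x ∈ D`. -/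
noncomputable def kHat {n : ℕ} (α β : Fin n → ℕ) (a : Fin n → ℝ) (c : ℕ)
    (x : Fin n → ℝ) : ℝ :=
  (1 - ∑ i ∈ univ.filter (fun i => 0 < α i), a i * x i ^ (2 * β i)) ^ (-(1 : ℝ) / (2 * (c : ℝ)))

/-- `f̃ⱼ(x) = κ̂(x)^{−(k+αⱼ)} fⱼ(κ̂(x)^{α₁}x₁,…,κ̂(x)^{αₙ}xₙ)`. -/
noncomputable def fTil {n : ℕ} (α β : Fin n → ℕ) (a : Fin n → ℝ) (c : ℕ) (k : ℤ)
    (f : (Fin n → ℝ) → Fin n → ℝ) (x : Fin n → ℝ) (j : Fin n) : ℝ :=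
  (kHat α β a c x) ^ (-(k + (α j : ℤ))) *
    f (fun i => (kHat α β a c x) ^ (α i) * x i) j

/-- `S(x) = ∑_{j∈I} βⱼ aⱼ xⱼ^{2βⱼ−1} f̃ⱼ(x)`. -/
noncomputable def SF {n : ℕ} (α β : Fin n → ℕ) (a : Fin n → ℝ) (c : ℕ) (k : ℤ)
    (f : (Fin n → ℝ) → Fin n → ℝ) (x : Fin n → ℝ) : ℝ :=
  ∑ j ∈ univ.filter (fun i => 0 < α i),
    (β j : ℝ) * a j * x j ^ (2 * β j - 1) * fTil α β a c k f x j

/-- The desingularized vector field `gᵢ(x) = f̃ᵢ(x) − (αᵢ xᵢ / c) S(x)`. -/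
noncomputable def gDesing {n : ℕ} (α β : Fin n → ℕ) (a : Fin n → ℝ) (c : ℕ) (k : ℤ)
    (f : (Fin n → ℝ) → Fin n → ℝ) (x : Fin n → ℝ) : Fin n → ℝ :=
  fun i => fTil α β a c k f x i - ((α i : ℝ) * x i / (c : ℝ)) * SF α β a c k f x

/-- `fak` is quasi-homogeneous of type `α` and order `k+1`:
`(f_{α,k})ⱼ(R^{α₁}x₁,…,R^{αₙ}xₙ) = R^{k+αⱼ} (f_{α,k})ⱼ(x)` for all `x, R`. -/
def IsQH {n : ℕ} (α : Fin n → ℕ) (k : ℕ)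
    (fak : (Fin n → ℝ) → Fin n → ℝ) : Prop :=
  ∀ (x : Fin n → ℝ) (R : ℝ) (j : Fin n),
    fak (fun i => R ^ (α i) * x i) j = R ^ (k + α j) * fak x j

/-- `f` is asymptotically quasi-homogeneous of type `α` and order `k+1` at infinity,
with quasi-homogeneous part `fak`: the renormalized difference tends to `0` as
`R → +∞`, uniformly for `(xᵢ)_{i∈I}` on the unit sphere and the remaining
coordinates in an arbitrary fixed compact set. -/
def IsAQH {n : ℕ} (α : Fin n → ℕ) (k : ℕ)
    (f fak : (Fin n → ℝ) → Fin n → ℝ) : Prop :=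
  IsQH α k fak ∧
  ∀ K : Set (Fin n → ℝ), IsCompact K → ∀ ε : ℝ, 0 < ε → ∃ R₀ : ℝ,
    ∀ R : ℝ, R₀ ≤ R → ∀ x ∈ K,
      (∑ i ∈ univ.filter (fun i => 0 < α i), x i ^ 2) = 1 →
      ∀ j : Fin n,
        |R ^ (-((k : ℤ) + (α j : ℤ))) *
          (f (fun i => R ^ (α i) * x i) j - R ^ (k + α j) * fak x j)| < ε

/-! Near a point `x₀` of the horizon some active coordinate of `x₀` is nonzero, so every
`x ∈ D` close to `x₀` has a quasi-homogeneous dilate `y = t^α x` on the unit sphere of the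
active coordinates, with `t` in a fixed compact interval of `(0, ∞)` and `y` in a fixed compact
set. Writing `κ̂(x) = R t`, quasi-homogeneity of `f_{α,k}` gives
`f̃ⱼ(x) − (f_{α,k})ⱼ(x) = t^{−(k+αⱼ)} R^{−(k+αⱼ)} (fⱼ(R^α y) − R^{k+αⱼ} (f_{α,k})ⱼ(y))`.
Since `κ̂ → ∞` at the horizon, `R → ∞` and this tends to `0` uniformly; so `f̃` extends
continuously by `f_{α,k}`, and `g`, a polynomial expression in `x` and `f̃`, extends with it. -/

open Filter Topology

section Desingularization

variable {n : ℕ} {α β : Fin n → ℕ} {a : Fin n → ℝ} {c : ℕ}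

noncomputable def weightedSum (α β : Fin n → ℕ) (a : Fin n → ℝ) (x : Fin n → ℝ) : ℝ :=
  ∑ i ∈ univ.filter (fun i => 0 < α i), a i * x i ^ (2 * β i)

def dilate (α : Fin n → ℕ) (t : ℝ) (x : Fin n → ℝ) : Fin n → ℝ :=
  fun i => t ^ α i * x i

noncomputable def activeSqNorm (α : Fin n → ℕ) (x : Fin n → ℝ) : ℝ :=
  ∑ i ∈ univ.filter (fun i => 0 < α i), x i ^ 2

lemma dilate_dilate (s t : ℝ) (x : Fin n → ℝ) :
    dilate α s (dilate α t x) = dilate α (s * t) x := by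
  funext i
  simp only [dilate, mul_pow]
  ring

lemma continuous_dilate : Continuous fun p : ℝ × (Fin n → ℝ) => dilate α p.1 p.2 := by
  unfold dilate
  fun_prop

lemma continuous_activeSqNorm : Continuous (activeSqNorm α) := by
  unfold activeSqNorm
  fun_prop

lemma continuous_weightedSum : Continuous (weightedSum α β a) := by
  unfold weightedSum
  fun_prop

lemma activeSqNorm_dilate_zero (x : Fin n → ℝ) : activeSqNorm α (dilate α 0 x) = 0 :=
  sum_eq_zero fun i hi => by simp [dilate, zero_pow (mem_filter.1 hi).2.ne']

lemma tendsto_activeSqNorm_dilate_atTop {x : Fin n → ℝ} {i₀ : Fin n} (hi₀ : 0 < α i₀)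
    (hx : x i₀ ≠ 0) : Tendsto (fun t => activeSqNorm α (dilate α t x)) atTop atTop := by
  have hterm : Tendsto (fun t : ℝ => dilate α t x i₀ ^ 2) atTop atTop := by
    simp only [dilate, mul_pow, ← pow_mul]
    exact (tendsto_pow_atTop (by omega)).atTop_mul_const (by positivity)
  refine tendsto_atTop_mono (fun t => ?_) hterm
  exact single_le_sum (f := fun i => dilate α t x i ^ 2) (fun i _ => sq_nonneg _) (by simp [hi₀])

lemma eventually_exists_activeSqNorm_dilate_eq_one {x₀ : Fin n → ℝ} {i₀ : Fin n}
    (hi₀ : 0 < α i₀) (hx₀ : x₀ i₀ ≠ 0) :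
    ∃ lo hi : ℝ, 0 < lo ∧
      ∀ᶠ x in 𝓝 x₀, ∃ t ∈ Set.Icc lo hi, activeSqNorm α (dilate α t x) = 1 := by
  set φ : ℝ × (Fin n → ℝ) → ℝ := fun p => activeSqNorm α (dilate α p.1 p.2)
  have hφ : Continuous φ := continuous_activeSqNorm.comp continuous_dilate
  obtain ⟨lo, hφlo, hlo⟩ : ∃ lo : ℝ, φ (lo, x₀) < 1 ∧ 0 < lo := by
    have h := (hφ.comp (Continuous.prodMk_left x₀)).tendsto 0
    simp only [Function.comp_def, φ, activeSqNorm_dilate_zero] at h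
    exact ((h.mono_left (nhdsWithin_le_nhds (s := Set.Ioi 0))).eventually
      (gt_mem_nhds one_pos)).and self_mem_nhdsWithin |>.exists
  obtain ⟨hi, hhi, hφhi⟩ : ∃ hi : ℝ, 0 < hi ∧ 1 < φ (hi, x₀) :=
    ((eventually_gt_atTop 0).and
      ((tendsto_activeSqNorm_dilate_atTop hi₀ hx₀).eventually_gt_atTop 1)).exists
  refine ⟨min lo hi, max lo hi, lt_min hlo hhi, ?_⟩
  have hlo_near : ∀ᶠ x in 𝓝 x₀, φ (lo, x) < 1 :=
    (hφ.comp (Continuous.prodMk_right lo)).continuousAt.eventually_lt continuousAt_const hφlo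
  have hhi_near : ∀ᶠ x in 𝓝 x₀, 1 < φ (hi, x) :=
    continuousAt_const.eventually_lt (hφ.comp (Continuous.prodMk_right hi)).continuousAt hφhi
  filter_upwards [hlo_near, hhi_near] with x hxlo hxhi
  exact intermediate_value_uIcc (hφ.comp (Continuous.prodMk_left x)).continuousOn
    (Set.mem_uIcc.2 (Or.inl ⟨hxlo.le, hxhi.le⟩))

lemma IsAQH.exists_abs_sub_lt {k : ℕ} {f fak : (Fin n → ℝ) → Fin n → ℝ}
    (h : IsAQH α k f fak) {K : Set (Fin n → ℝ)} (hK : IsCompact K) {lo hi : ℝ} (hlo : 0 < lo)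
    (j : Fin n) {ε : ℝ} (hε : 0 < ε) :
    ∃ C, ∀ κ ≥ C, ∀ x ∈ K, ∀ t ∈ Set.Icc lo hi, activeSqNorm α (dilate α t x) = 1 →
      |κ ^ (-((k : ℤ) + (α j : ℤ))) * f (dilate α κ x) j - fak x j| < ε := by
  set m := k + α j
  have hK' : IsCompact ((fun p : ℝ × (Fin n → ℝ) => dilate α p.1 p.2) '' (Set.Icc lo hi ×ˢ K)) :=
    (isCompact_Icc.prod hK).image continuous_dilate
  obtain ⟨R₀, hR₀⟩ := h.2 _ hK' (ε * lo ^ m) (by positivity)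
  refine ⟨max R₀ 1 * hi, fun κ hκ x hx t ht hsphere => ?_⟩
  have ht0 : 0 < t := hlo.trans_le ht.1
  set R := κ / t
  have hR : max R₀ 1 ≤ R :=
    (le_div_iff₀ ht0).2 ((mul_le_mul_of_nonneg_left ht.2 (by positivity)).trans hκ)
  have hR0 : 0 < R := one_pos.trans_le ((le_max_right _ _).trans hR)
  have hκR : κ = R * t := (div_mul_cancel₀ κ ht0.ne').symm
  set y := dilate α t x
  set A := R ^ (-((k : ℤ) + (α j : ℤ))) * (f (dilate α R y) j - R ^ m * fak y j) with hAdef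
  have hA : |A| < ε * lo ^ m :=
    hR₀ R ((le_max_left _ _).trans hR) y ⟨(t, x), ⟨ht, hx⟩, rfl⟩ hsphere j
  have hm : (k : ℤ) + (α j : ℤ) = (m : ℤ) := by push_cast [m]; rfl
  have hscale : κ ^ (-((k : ℤ) + (α j : ℤ))) * f (dilate α κ x) j - fak x j = A / t ^ m := by
    have hqh : fak y j = t ^ m * fak x j := h.1 x t j
    rw [hAdef, dilate_dilate, ← hκR, hqh, hm, zpow_neg, zpow_neg, zpow_natCast, zpow_natCast, hκR,
      mul_pow]
    field_simp
  calc |κ ^ (-((k : ℤ) + (α j : ℤ))) * f (dilate α κ x) j - fak x j|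
      = |A| / t ^ m := by rw [hscale, abs_div, abs_of_pos (pow_pos ht0 m)]
    _ ≤ |A| / lo ^ m :=
        div_le_div_of_nonneg_left (abs_nonneg _) (by positivity) (pow_le_pow_left₀ hlo.le ht.1 m)
    _ < ε * lo ^ m / lo ^ m := div_lt_div_of_pos_right hA (by positivity)
    _ = ε := by field_simp

lemma weightedSum_nonneg (ha : ∀ i, 0 ≤ a i) (x : Fin n → ℝ) : 0 ≤ weightedSum α β a x :=
  sum_nonneg fun i _ => mul_nonneg (ha i) (by rw [pow_mul]; positivity)

lemma pF_lt_one_iff (hc : 0 < c) (ha : ∀ i, 0 ≤ a i) (x : Fin n → ℝ) :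
    pF α β a c x < 1 ↔ weightedSum α β a x < 1 := by
  have h := Real.rpow_lt_rpow_iff (weightedSum_nonneg (α := α) (β := β) ha x) zero_le_one
    (z := 1 / (2 * c)) (by positivity)
  rwa [Real.one_rpow] at h

lemma pF_le_one_iff (hc : 0 < c) (ha : ∀ i, 0 ≤ a i) (x : Fin n → ℝ) :
    pF α β a c x ≤ 1 ↔ weightedSum α β a x ≤ 1 := by
  have h := Real.rpow_le_rpow_iff (weightedSum_nonneg (α := α) (β := β) ha x) zero_le_one
    (z := 1 / (2 * c)) (by positivity)
  rwa [Real.one_rpow] at h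

lemma pF_eq_one_iff (hc : 0 < c) (ha : ∀ i, 0 ≤ a i) (x : Fin n → ℝ) :
    pF α β a c x = 1 ↔ weightedSum α β a x = 1 := by
  rw [eq_iff_le_not_lt, eq_iff_le_not_lt, pF_le_one_iff hc ha, pF_lt_one_iff hc ha]

lemma kHat_pos {x : Fin n → ℝ} (hx : weightedSum α β a x < 1) : 0 < kHat α β a c x :=
  Real.rpow_pos_of_pos (sub_pos.2 hx) _

lemma continuousAt_kHat {x : Fin n → ℝ} (hx : weightedSum α β a x < 1) :
    ContinuousAt (kHat α β a c) x :=
  (continuous_const.sub continuous_weightedSum).continuousAt.rpow_const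
    (Or.inl (sub_pos.2 hx).ne')

lemma tendsto_kHat_atTop (hc : 0 < c) {x₀ : Fin n → ℝ} (hx₀ : weightedSum α β a x₀ = 1) :
    Tendsto (kHat α β a c) (𝓝[{x | weightedSum α β a x < 1}] x₀) atTop := by
  have hgap : Tendsto (fun x => 1 - weightedSum α β a x)
      (𝓝[{x | weightedSum α β a x < 1}] x₀) (𝓝[>] 0) := by
    refine tendsto_nhdsWithin_iff.2
      ⟨?_, eventually_mem_nhdsWithin.mono fun x hx => Set.mem_Ioi.2 (sub_pos.2 hx)⟩
    have h : Tendsto (fun x => 1 - weightedSum α β a x) (𝓝 x₀) (𝓝 (1 - weightedSum α β a x₀)) :=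
      (continuous_const.sub continuous_weightedSum).tendsto x₀
    rw [hx₀, sub_self] at h
    exact h.mono_left nhdsWithin_le_nhds
  exact (tendsto_rpow_neg_nhdsGT_zero (by rw [neg_div]; exact neg_neg_of_pos (by positivity))).comp
    hgap

lemma continuousAt_fTil (k : ℤ) {f : (Fin n → ℝ) → Fin n → ℝ} (hf : Continuous f) (j : Fin n)
    {x : Fin n → ℝ} (hx : weightedSum α β a x < 1) :
    ContinuousAt (fun y => fTil α β a c k f y j) x := by
  have hκ := continuousAt_kHat (c := c) hx
  exact (hκ.zpow₀ _ (Or.inl (kHat_pos hx).ne')).mul <|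
    ((continuous_apply j).comp hf).continuousAt.comp <|
      continuousAt_pi.2 fun i => (hκ.pow _).mul (continuous_apply i).continuousAt

lemma exists_active_coord_ne_zero (hβ : ∀ i, 0 < α i → 0 < β i) {x₀ : Fin n → ℝ}
    (hx₀ : weightedSum α β a x₀ = 1) : ∃ i₀, 0 < α i₀ ∧ x₀ i₀ ≠ 0 := by
  obtain ⟨i, hi, hne⟩ := exists_ne_zero_of_sum_ne_zero (hx₀.trans_ne one_ne_zero)
  have hαi := (mem_filter.1 hi).2
  refine ⟨i, hαi, fun h0 => hne ?_⟩
  rw [h0, zero_pow (by have := hβ i hαi; omega), mul_zero]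

theorem tendsto_fTil_horizon (hc : 0 < c) (hβ : ∀ i, 0 < α i → 0 < β i) {k : ℕ}
    {f fak : (Fin n → ℝ) → Fin n → ℝ} (hfak : Continuous fak) (haqh : IsAQH α k f fak)
    {x₀ : Fin n → ℝ} (hx₀ : weightedSum α β a x₀ = 1) (j : Fin n) :
    Tendsto (fun x => fTil α β a c k f x j) (𝓝[{x | weightedSum α β a x < 1}] x₀)
      (𝓝 (fak x₀ j)) := by
  obtain ⟨i₀, hi₀, hx₀i₀⟩ := exists_active_coord_ne_zero hβ hx₀
  obtain ⟨lo, hi, hlo, hnormalize⟩ := eventually_exists_activeSqNorm_dilate_eq_one hi₀ hx₀i₀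
  have hfak_j : Tendsto (fun x => fak x j) (𝓝[{x | weightedSum α β a x < 1}] x₀)
      (𝓝 (fak x₀ j)) :=
    ((continuous_apply j).comp hfak).continuousWithinAt
  suffices Tendsto (fun x => fTil α β a c k f x j - fak x j)
      (𝓝[{x | weightedSum α β a x < 1}] x₀) (𝓝 0) by
    simpa using this.add hfak_j
  refine Metric.tendsto_nhds.2 fun ε hε => ?_
  obtain ⟨C, hC⟩ := haqh.exists_abs_sub_lt (isCompact_closedBall x₀ 1) hlo j hε
  filter_upwards [(tendsto_kHat_atTop hc hx₀).eventually_ge_atTop C,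
    nhdsWithin_le_nhds (Metric.closedBall_mem_nhds x₀ one_pos), nhdsWithin_le_nhds hnormalize]
    with x hκ hxK ⟨t, ht, hsphere⟩
  rw [Real.dist_eq, sub_zero]
  exact hC _ hκ x hxK t ht hsphere

noncomputable def horizonExtension (α β : Fin n → ℕ) (a : Fin n → ℝ) (c : ℕ) (k : ℤ)
    (f fak : (Fin n → ℝ) → Fin n → ℝ) (x : Fin n → ℝ) : Fin n → ℝ :=
  if weightedSum α β a x < 1 then fTil α β a c k f x else fak x

theorem continuousOn_horizonExtension (hc : 0 < c) (hβ : ∀ i, 0 < α i → 0 < β i) {k : ℕ}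
    {f fak : (Fin n → ℝ) → Fin n → ℝ} (hf : Continuous f) (hfak : Continuous fak)
    (haqh : IsAQH α k f fak) :
    ContinuousOn (horizonExtension α β a c k f fak) {x | weightedSum α β a x ≤ 1} := by
  intro x₀ (hx₀ : weightedSum α β a x₀ ≤ 1)
  rcases hx₀.lt_or_eq with hlt | heq
  · have hD : IsOpen {x | weightedSum α β a x < 1} :=
      isOpen_lt continuous_weightedSum continuous_const
    have hloc : fTil α β a c k f =ᶠ[𝓝 x₀] horizonExtension α β a c k f fak := by
      filter_upwards [hD.mem_nhds hlt] with x hx using (if_pos hx).symm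
    exact ((continuousAt_pi.2 fun j => continuousAt_fTil _ hf j hlt).congr hloc).continuousWithinAt
  · have hsplit : {x | weightedSum α β a x ≤ 1} =
        {x | weightedSum α β a x < 1} ∪ {x | weightedSum α β a x = 1} := by
      simp only [le_iff_lt_or_eq, Set.ofPred_or]
    have hval : horizonExtension α β a c k f fak x₀ = fak x₀ := if_neg heq.not_lt
    rw [hsplit, continuousWithinAt_union]
    constructor
    · rw [ContinuousWithinAt, hval, tendsto_pi_nhds]
      refine fun j => (tendsto_fTil_horizon hc hβ hfak haqh heq j).congr' ?_
      filter_upwards [self_mem_nhdsWithin] with x hx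
      rw [horizonExtension, if_pos hx]
    · exact hfak.continuousWithinAt.congr (fun x hx => if_neg (hx : _ = (1 : ℝ)).not_lt) hval

noncomputable def desingularize (α β : Fin n → ℕ) (a : Fin n → ℝ) (c : ℕ)
    (x v : Fin n → ℝ) : Fin n → ℝ :=
  fun i => v i - ((α i : ℝ) * x i / (c : ℝ)) *
    ∑ j ∈ univ.filter (fun l => 0 < α l), (β j : ℝ) * a j * x j ^ (2 * β j - 1) * v j

lemma ContinuousOn.desingularize {F : (Fin n → ℝ) → Fin n → ℝ} {s : Set (Fin n → ℝ)}
    (hF : ContinuousOn F s) : ContinuousOn (fun x => desingularize α β a c x (F x)) s := by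
  unfold _root_.desingularize
  fun_prop

end Desingularization

theorem desing_extends_continuously_to_horizon_general
    {n : ℕ} (α β : Fin n → ℕ) (a : Fin n → ℝ) (c : ℕ)
    (hc : 0 < c)
    (hαβ : ∀ i, 0 < α i → α i * β i = c)
    (ha : ∀ i, 1 ≤ a i)
    (k : ℕ)
    (f fak : (Fin n → ℝ) → Fin n → ℝ)
    (hf : Continuous f) (hfak : Continuous fak)
    (haqh : IsAQH α k f fak) :
    ∃ G : (Fin n → ℝ) → Fin n → ℝ,
      ContinuousOn G {x : Fin n → ℝ | pF α β a c x ≤ 1} ∧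
      (∀ x : Fin n → ℝ, pF α β a c x < 1 → G x = gDesing α β a c (k : ℤ) f x) ∧
      (∀ x : Fin n → ℝ, pF α β a c x = 1 → ∀ i : Fin n,
        G x i = fak x i - ((α i : ℝ) * x i / (c : ℝ)) *
          ∑ j ∈ univ.filter (fun l => 0 < α l),
            (β j : ℝ) * a j * x j ^ (2 * β j - 1) * fak x j) := by
  have hβ : ∀ i, 0 < α i → 0 < β i := fun i hi =>
    Nat.pos_of_ne_zero fun h0 => hc.ne' (by rw [← hαβ i hi, h0, mul_zero])
  have ha₀ : ∀ i, 0 ≤ a i := fun i => zero_le_one.trans (ha i)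
  refine ⟨fun x => desingularize α β a c x (horizonExtension α β a c k f fak x), ?_,
    fun x hx => ?_, fun x hx i => ?_⟩
  · have hdisk : {x | pF α β a c x ≤ 1} = {x | weightedSum α β a x ≤ 1} :=
      Set.ext fun x => pF_le_one_iff hc ha₀ x
    rw [hdisk]
    exact (continuousOn_horizonExtension hc hβ hf hfak haqh).desingularize
  · dsimp only
    rw [horizonExtension, if_pos ((pF_lt_one_iff hc ha₀ x).1 hx)]
    rfl
  · dsimp only
    rw [horizonExtension, if_neg ((pF_eq_one_iff hc ha₀ x).1 hx).not_lt]
    rfl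

/-- If `f` is continuous and asymptotically quasi-homogeneous with continuous
quasi-homogeneous part `f_{α,k}`, then the desingularized vector field `g`
extends to a continuous map `G` on the closed disk `D̄ = {p ≤ 1}`, whose value
on the horizon `E = {p = 1}` is
`Gᵢ(x) = (f_{α,k})ᵢ(x) − (αᵢxᵢ/c) ∑_{j∈I} βⱼaⱼ xⱼ^{2βⱼ−1} (f_{α,k})ⱼ(x)`. -/
theorem desing_extends_continuously_to_horizon
    {n : ℕ} (hn : 1 ≤ n) (α β : Fin n → ℕ) (a : Fin n → ℝ) (c : ℕ)
    (hα : ∃ i, 0 < α i) (hc : 0 < c)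
    (hαβ : ∀ i, 0 < α i → α i * β i = c)
    (hβ0 : ∀ i, α i = 0 → β i = 0)
    (ha : ∀ i, 1 ≤ a i)
    (k : ℕ) (hk : 1 ≤ k)
    (f fak : (Fin n → ℝ) → Fin n → ℝ)
    (hf : Continuous f) (hfak : Continuous fak)
    (haqh : IsAQH α k f fak) :
    ∃ G : (Fin n → ℝ) → Fin n → ℝ,
      ContinuousOn G {x : Fin n → ℝ | pF α β a c x ≤ 1} ∧
      (∀ x : Fin n → ℝ, pF α β a c x < 1 → G x = gDesing α β a c (k : ℤ) f x) ∧
      (∀ x : Fin n → ℝ, pF α β a c x = 1 → ∀ i : Fin n,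
        G x i = fak x i - ((α i : ℝ) * x i / (c : ℝ)) *
          ∑ j ∈ univ.filter (fun l => 0 < α l),
            (β j : ℝ) * a j * x j ^ (2 * β j - 1) * fak x j) :=
  desing_extends_continuously_to_horizon_general α β a c hc hαβ ha k f fak hf hfak haqh
end

section
/- Let x : [0,∞) → D̄ be continuous, let x* ∈ E (i.e. p(x*) = 1), and suppose there are constants C, m > 0 with |x(τ) − x*| ≤ C e^{−mτ} for all τ ≥ 0 (exponential convergence to the horizon, as holds for trajectories on the stable manifold of a hyperbolic equilibrium at infinity). Then ∫₀^∞ (1 − p(x(τ))^{2c})^{k/(2c)} dτ < ∞. In particular, if x(τ) ∈ D for all τ and y(τ) = T⁻¹(x(τ)), then the blow-up time t_max := ∫₀^∞ κ(y(τ))^{−k} dτ is finite. -/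
/-!
Write `S(y) = p(y)^{2c} = ∑_{i∈I} aᵢ yᵢ^{2βᵢ}`. On the closed disk every coordinate `yᵢ` with
`i ∈ I` lies in `[-1, 1]`, so `S` is Lipschitz there, with constant `L = ∑_{i∈I} 2βᵢaᵢ` for
the sup norm; since `S(x*) = 1`, this gives
`1 - S(x(τ)) ≤ L C e^{-mτ}`, and the `k/(2c)`-th power of the right-hand side is integrable on
`[0, ∞)`. For the blow-up time, `S(T y) = S(y)/κ(y)^{2c}` and `κ(y)^{2c} = 1 + S(y)`, so
`1 - S(T y) = κ(y)^{-2c}` and the two integrands agree.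
-/

open Finset

/-- The quasi-Poincaré functional `κ(y) = (1 + p(y)^{2c})^{1/(2c)}`. -/
noncomputable def kF {n : ℕ} (α β : Fin n → ℕ) (a : Fin n → ℝ) (c : ℕ)
    (y : Fin n → ℝ) : ℝ :=
  (1 + pF α β a c y ^ (2 * c)) ^ ((1 : ℝ) / (2 * (c : ℝ)))

/-- The quasi-Poincaré compactification `T(y)ᵢ = yᵢ / κ(y)^{αᵢ}`. -/
noncomputable def TqP {n : ℕ} (α β : Fin n → ℕ) (a : Fin n → ℝ) (c : ℕ)
    (y : Fin n → ℝ) : Fin n → ℝ :=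
  fun i => y i / (kF α β a c y) ^ (α i)

open Real MeasureTheory Set

lemma abs_pow_sub_pow_le_of_abs_le_one {u v : ℝ} (hu : |u| ≤ 1) (hv : |v| ≤ 1) (p : ℕ) :
    |u ^ p - v ^ p| ≤ p * |u - v| :=
  calc |u ^ p - v ^ p| ≤ |u - v| * p * max |u| |v| ^ (p - 1) := abs_pow_sub_pow_le ..
    _ ≤ |u - v| * p * 1 := by gcongr; exact pow_le_one₀ (by positivity) (max_le hu hv)
    _ = p * |u - v| := by ring

lemma integrableOn_Ici_rpow_of_le_mul_exp {f : ℝ → ℝ} {K m r : ℝ}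
    (hf : ContinuousOn f (Ici 0)) (hf0 : ∀ τ, 0 ≤ τ → 0 ≤ f τ)
    (hfK : ∀ τ, 0 ≤ τ → f τ ≤ K * exp (-m * τ)) (hm : 0 < m) (hr : 0 < r) :
    IntegrableOn (fun τ => f τ ^ r) (Ici 0) := by
  have hK : 0 ≤ K := by simpa using (hf0 0 le_rfl).trans (hfK 0 le_rfl)
  have hbound : IntegrableOn (fun τ => K ^ r * exp (-(m * r) * τ)) (Ici 0) := by
    rw [integrableOn_Ici_iff_integrableOn_Ioi]
    exact (exp_neg_integrableOn_Ioi 0 (by positivity)).const_mul _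
  refine hbound.mono' ((continuousOn_id.rpow_const fun _ _ => Or.inr hr.le).comp hf
    (mapsTo_univ _ _) |>.aestronglyMeasurable measurableSet_Ici) ?_
  rw [ae_restrict_iff' measurableSet_Ici]
  refine ae_of_all _ fun τ (hτ : 0 ≤ τ) => ?_
  rw [norm_of_nonneg (rpow_nonneg (hf0 τ hτ) r)]
  calc f τ ^ r ≤ (K * exp (-m * τ)) ^ r := rpow_le_rpow (hf0 τ hτ) (hfK τ hτ) hr.le
    _ = K ^ r * exp (-(m * r) * τ) := by
      rw [mul_rpow hK (exp_nonneg _), ← exp_mul]; ring_nf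

section Compactification

variable {n : ℕ} {α β : Fin n → ℕ} {a : Fin n → ℝ} {c : ℕ}

variable (α β a) in
/-- The polynomial `S(y) = p(y)^{2c}`. -/
noncomputable def pSum (y : Fin n → ℝ) : ℝ :=
  ∑ i ∈ univ.filter (fun i => 0 < α i), a i * y i ^ (2 * β i)

lemma pSum_nonneg (ha : ∀ i, 0 ≤ a i) (y : Fin n → ℝ) : 0 ≤ pSum α β a y :=
  sum_nonneg fun i _ => mul_nonneg (ha i) ((even_two_mul _).pow_nonneg _)

lemma continuous_pSum : Continuous (pSum α β a) :=
  continuous_finsetSum _ fun i _ => continuous_const.mul ((continuous_apply i).pow _)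

lemma rpow_one_div_two_mul_pow {s : ℝ} (hs : 0 ≤ s) (hc : c ≠ 0) :
    (s ^ ((1 : ℝ) / (2 * (c : ℝ)))) ^ (2 * c) = s := by
  rw [one_div, ← Nat.cast_ofNat, ← Nat.cast_mul]
  exact rpow_inv_natCast_pow hs (by positivity)

lemma pF_pow (hc : c ≠ 0) (ha : ∀ i, 0 ≤ a i) (y : Fin n → ℝ) :
    pF α β a c y ^ (2 * c) = pSum α β a y :=
  rpow_one_div_two_mul_pow (pSum_nonneg ha y) hc

lemma kF_pow (hc : c ≠ 0) (ha : ∀ i, 0 ≤ a i) (y : Fin n → ℝ) :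
    kF α β a c y ^ (2 * c) = 1 + pSum α β a y := by
  rw [kF, pF_pow hc ha]
  exact rpow_one_div_two_mul_pow (by linarith [(pSum_nonneg ha y : 0 ≤ pSum α β a y)]) hc

lemma kF_pos (y : Fin n → ℝ) : 0 < kF α β a c y :=
  rpow_pos_of_pos (by linarith [(even_two_mul c).pow_nonneg (pF α β a c y)]) _

lemma abs_le_one_of_pSum_le_one (ha : ∀ i, 1 ≤ a i) {y : Fin n → ℝ}
    (hy : pSum α β a y ≤ 1) {i : Fin n} (hi : 0 < α i) (hβ : β i ≠ 0) : |y i| ≤ 1 := by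
  have hterm : a i * y i ^ (2 * β i) ≤ 1 :=
    (single_le_sum (fun j _ => mul_nonneg (zero_le_one.trans (ha j))
      ((even_two_mul _).pow_nonneg _)) (by simp [hi])).trans hy
  have hpow : |y i| ^ (2 * β i) ≤ 1 := by
    rw [(even_two_mul _).pow_abs]
    nlinarith [ha i, (even_two_mul (β i)).pow_nonneg (y i)]
  exact (pow_le_one_iff_of_nonneg (abs_nonneg _) (by omega)).1 hpow

lemma pSum_sub_pSum_le (ha : ∀ i, 1 ≤ a i) (hβ : ∀ i, 0 < α i → β i ≠ 0)
    {u v : Fin n → ℝ} (hu : pSum α β a u ≤ 1) (hv : pSum α β a v ≤ 1) :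
    pSum α β a u - pSum α β a v ≤
      (∑ i ∈ univ.filter (fun i => 0 < α i), a i * (2 * β i)) * ‖u - v‖ := by
  rw [pSum, pSum, ← sum_sub_distrib, sum_mul]
  refine sum_le_sum fun i hi => ?_
  have hi : 0 < α i := (mem_filter.1 hi).2
  rw [← mul_sub, mul_assoc]
  gcongr
  · exact zero_le_one.trans (ha i)
  calc u i ^ (2 * β i) - v i ^ (2 * β i) ≤ |u i ^ (2 * β i) - v i ^ (2 * β i)| := le_abs_self _
    _ ≤ ((2 * β i : ℕ) : ℝ) * |u i - v i| := abs_pow_sub_pow_le_of_abs_le_one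
        (abs_le_one_of_pSum_le_one ha hu hi (hβ i hi))
        (abs_le_one_of_pSum_le_one ha hv hi (hβ i hi)) _
    _ ≤ 2 * β i * ‖u - v‖ := by push_cast; gcongr; exact norm_le_pi_norm (u - v) i

lemma pSum_le_one_of_pF_le_one (hc : c ≠ 0) (ha : ∀ i, 0 ≤ a i) {y : Fin n → ℝ}
    (hy : pF α β a c y ≤ 1) : pSum α β a y ≤ 1 := by
  rw [← pF_pow hc ha]
  exact pow_le_one₀ (rpow_nonneg (pSum_nonneg ha y) _) hy

lemma one_sub_pSum_le_of_pF_eq_one (hc : c ≠ 0) (ha : ∀ i, 1 ≤ a i)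
    (hαβ : ∀ i, 0 < α i → α i * β i = c) {y ys : Fin n → ℝ}
    (hy : pF α β a c y ≤ 1) (hys : pF α β a c ys = 1) :
    1 - pSum α β a y ≤ (∑ i ∈ univ.filter (fun i => 0 < α i), a i * (2 * β i)) * ‖y - ys‖ := by
  have ha0 : ∀ i, 0 ≤ a i := fun i => zero_le_one.trans (ha i)
  have hβ : ∀ i, 0 < α i → β i ≠ 0 := fun i hi hβi => by
    have := hαβ i hi
    rw [hβi, mul_zero] at this
    exact hc this.symm
  have hys' : pSum α β a ys = 1 := by rw [← pF_pow hc ha0, hys, one_pow]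
  rw [← hys', norm_sub_rev]
  exact pSum_sub_pSum_le ha hβ hys'.le (pSum_le_one_of_pF_le_one hc ha0 hy)

lemma pSum_TqP (hαβ : ∀ i, 0 < α i → α i * β i = c) (y : Fin n → ℝ) :
    pSum α β a (TqP α β a c y) = pSum α β a y / kF α β a c y ^ (2 * c) := by
  rw [pSum, pSum, sum_div]
  refine sum_congr rfl fun i hi => ?_
  rw [TqP, div_pow, ← pow_mul, mul_left_comm, hαβ i (mem_filter.1 hi).2, mul_div_assoc]

lemma one_sub_pSum_TqP (hc : c ≠ 0) (ha : ∀ i, 0 ≤ a i)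
    (hαβ : ∀ i, 0 < α i → α i * β i = c) (y : Fin n → ℝ) :
    1 - pSum α β a (TqP α β a c y) = (kF α β a c y ^ (2 * c))⁻¹ := by
  have hS : 1 + pSum α β a y ≠ 0 := by linarith [(pSum_nonneg ha y : 0 ≤ pSum α β a y)]
  rw [pSum_TqP hαβ, kF_pow hc ha]
  field_simp
  ring

lemma one_sub_pF_TqP_rpow (hc : c ≠ 0) (ha : ∀ i, 0 ≤ a i)
    (hαβ : ∀ i, 0 < α i → α i * β i = c) (k : ℕ) (y : Fin n → ℝ) :
    (1 - pF α β a c (TqP α β a c y) ^ (2 * c)) ^ ((k : ℝ) / (2 * (c : ℝ))) =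
      kF α β a c y ^ (-(k : ℤ)) := by
  have hK : 0 ≤ kF α β a c y := (kF_pos y).le
  rw [pF_pow hc ha, one_sub_pSum_TqP hc ha hαβ, ← rpow_natCast, ← rpow_neg hK, ← rpow_mul hK,
    ← rpow_intCast]
  congr 1
  push_cast
  field_simp

end Compactification

theorem blowup_time_finite_of_exponential_convergence_general
    {n : ℕ} (α β : Fin n → ℕ) (a : Fin n → ℝ) (c : ℕ)
    (hc : 0 < c)
    (hαβ : ∀ i, 0 < α i → α i * β i = c)
    (ha : ∀ i, 1 ≤ a i)
    (k : ℕ) (hk : 1 ≤ k)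
    (x : ℝ → Fin n → ℝ) (hxc : ContinuousOn x (Set.Ici 0))
    (hxD : ∀ τ : ℝ, 0 ≤ τ → pF α β a c (x τ) ≤ 1)
    (xs : Fin n → ℝ) (hxs : pF α β a c xs = 1)
    (C m : ℝ) (hm : 0 < m)
    (hconv : ∀ τ : ℝ, 0 ≤ τ → ‖x τ - xs‖ ≤ C * Real.exp (-m * τ)) :
    MeasureTheory.IntegrableOn
      (fun τ : ℝ => (1 - pF α β a c (x τ) ^ (2 * c)) ^ ((k : ℝ) / (2 * (c : ℝ))))
      (Set.Ici 0) ∧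
    ∀ y : ℝ → Fin n → ℝ,
      (∀ τ : ℝ, 0 ≤ τ → TqP α β a c (y τ) = x τ) →
      (∀ τ : ℝ, 0 ≤ τ → pF α β a c (x τ) < 1) →
      MeasureTheory.IntegrableOn
        (fun τ : ℝ => (kF α β a c (y τ)) ^ (-(k : ℤ))) (Set.Ici 0) := by
  have ha0 : ∀ i, 0 ≤ a i := fun i => zero_le_one.trans (ha i)
  set L := ∑ i ∈ univ.filter (fun i => 0 < α i), a i * (2 * β i)
  have hL : 0 ≤ L := sum_nonneg fun i _ => by have := ha0 i; positivity
  have hfirst : IntegrableOn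
      (fun τ : ℝ => (1 - pF α β a c (x τ) ^ (2 * c)) ^ ((k : ℝ) / (2 * (c : ℝ)))) (Ici 0) := by
    simp_rw [pF_pow hc.ne' ha0]
    refine integrableOn_Ici_rpow_of_le_mul_exp (K := L * C) (m := m)
      (continuousOn_const.sub (continuous_pSum.comp_continuousOn hxc))
      (fun τ hτ => sub_nonneg.2 (pSum_le_one_of_pF_le_one hc.ne' ha0 (hxD τ hτ)))
      (fun τ hτ => ?_) hm (by positivity)
    calc 1 - pSum α β a (x τ) ≤ L * ‖x τ - xs‖ :=
          one_sub_pSum_le_of_pF_eq_one hc.ne' ha hαβ (hxD τ hτ) hxs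
      _ ≤ L * (C * exp (-m * τ)) := by gcongr; exact hconv τ hτ
      _ = L * C * exp (-m * τ) := by ring
  refine ⟨hfirst, fun y hy _ => hfirst.congr_fun (fun τ (hτ : 0 ≤ τ) => ?_) measurableSet_Ici⟩
  simp only [← hy τ hτ, one_sub_pF_TqP_rpow hc.ne' ha0 hαβ]

/-- Exponential convergence to a point `x*` on the horizon implies finiteness of
`∫₀^∞ (1 − p(x(τ))^{2c})^{k/(2c)} dτ`; in particular, if `x(τ) ∈ D` and
`y = T⁻¹ ∘ x`, the blow-up time `t_max = ∫₀^∞ κ(y(τ))^{−k} dτ` is finite. -/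
theorem blowup_time_finite_of_exponential_convergence
    {n : ℕ} (hn : 1 ≤ n) (α β : Fin n → ℕ) (a : Fin n → ℝ) (c : ℕ)
    (hα : ∃ i, 0 < α i) (hc : 0 < c)
    (hαβ : ∀ i, 0 < α i → α i * β i = c)
    (hβ0 : ∀ i, α i = 0 → β i = 0)
    (ha : ∀ i, 1 ≤ a i)
    (k : ℕ) (hk : 1 ≤ k)
    (x : ℝ → Fin n → ℝ) (hxc : ContinuousOn x (Set.Ici 0))
    (hxD : ∀ τ : ℝ, 0 ≤ τ → pF α β a c (x τ) ≤ 1)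
    (xs : Fin n → ℝ) (hxs : pF α β a c xs = 1)
    (C m : ℝ) (hC : 0 < C) (hm : 0 < m)
    (hconv : ∀ τ : ℝ, 0 ≤ τ → ‖x τ - xs‖ ≤ C * Real.exp (-m * τ)) :
    MeasureTheory.IntegrableOn
      (fun τ : ℝ => (1 - pF α β a c (x τ) ^ (2 * c)) ^ ((k : ℝ) / (2 * (c : ℝ))))
      (Set.Ici 0) ∧
    ∀ y : ℝ → Fin n → ℝ,
      (∀ τ : ℝ, 0 ≤ τ → TqP α β a c (y τ) = x τ) →
      (∀ τ : ℝ, 0 ≤ τ → pF α β a c (x τ) < 1) →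
      MeasureTheory.IntegrableOn
        (fun τ : ℝ => (kF α β a c (y τ)) ^ (-(k : ℤ))) (Set.Ici 0) :=
  blowup_time_finite_of_exponential_convergence_general α β a c hc hαβ ha k hk x hxc hxD xs hxs C m
    hm hconv
end
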